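/- arXiv:1308.3520 — 6 statements merged into one kernel-verified Lean document; each statement's English description precedes it below -/
import Mathlib

section
/- Let (G = (V₁, V₂, E), Σ, π) be a projection game and let (B, (C_x)_{x∈Σ}) be a family of subsets of a finite universe B indexed by Σ. If there is a labeling δ : V₁ ∪ V₂ → Σ that satisfies every edge of G (that is, π_e(δ(u)) = δ(v) for every edge e = (u,v) ∈ E), then the associated Set Cover instance has a set cover of size |V₁| + |V₂|: the collection {S_{w,δ(w)} : w ∈ V₁ ∪ V₂} covers the universe E × B. -/
/-- The sets of the Set Cover instance associated to a projection game
`(G = (V₁, V₂, E), A, π)` and a family `(C_x)_{x ∈ A}` of subsets of `B`: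
`S_{u,y} = ⋃_{e∋u} {e} × (B ∖ C_{π_e(y)})` for `u ∈ V₁`, and
`S_{v,x} = ⋃_{e∋v} {e} × C_x` for `v ∈ V₂`. -/
def projSet {V₁ V₂ A B : Type} (E : Set (V₁ × V₂)) (π : V₁ × V₂ → A → A)
    (C : A → Set B) : (V₁ ⊕ V₂) × A → Set ((V₁ × V₂) × B)
  | (Sum.inl u, y) => {p | p.1 ∈ E ∧ p.1.1 = u ∧ p.2 ∉ C (π p.1 y)}
  | (Sum.inr v, x) => {p | p.1 ∈ E ∧ p.1.2 = v ∧ p.2 ∈ C x}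

/- For an edge `e = (u, v)` and `b ∈ B`, either `b ∈ C_{δ(v)}` and `S_{v,δ(v)}` contains `(e, b)`,
or `b ∉ C_{δ(v)} = C_{π_e(δ(u))}` and `S_{u,δ(u)}` does. -/
theorem prod_univ_subset_iUnion_projSet {V₁ V₂ A B : Type}
    (E : Set (V₁ × V₂)) (π : V₁ × V₂ → A → A) (C : A → Set B)
    (δ₁ : V₁ → A) (δ₂ : V₂ → A) (hsat : ∀ e ∈ E, π e (δ₁ e.1) = δ₂ e.2) :
    E ×ˢ (Set.univ : Set B) ⊆ ⋃ w : V₁ ⊕ V₂, projSet E π C (w, Sum.elim δ₁ δ₂ w) := by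
  rintro ⟨e, b⟩ ⟨he, -⟩
  by_cases hb : b ∈ C (δ₂ e.2)
  · exact Set.mem_iUnion.2 ⟨Sum.inr e.2, he, rfl, hb⟩
  · refine Set.mem_iUnion.2 ⟨Sum.inl e.1, he, rfl, ?_⟩
    rwa [Sum.elim_inl, hsat e he]

open scoped Classical in
theorem stmt_2_general {V₁ V₂ A B : Type} [Fintype V₁] [Fintype V₂]
    (E : Set (V₁ × V₂)) (π : V₁ × V₂ → A → A) (C : A → Set B)
    (δ₁ : V₁ → A) (δ₂ : V₂ → A)
    (hsat : ∀ e ∈ E, π e (δ₁ e.1) = δ₂ e.2) :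
    (E ×ˢ (Set.univ : Set B) ⊆
      ⋃ w : V₁ ⊕ V₂, projSet E π C (w, Sum.elim δ₁ δ₂ w)) ∧
    (Finset.univ.image
        (fun w : V₁ ⊕ V₂ => projSet E π C (w, Sum.elim δ₁ δ₂ w))).card ≤
      Fintype.card V₁ + Fintype.card V₂ :=
  ⟨prod_univ_subset_iUnion_projSet E π C δ₁ δ₂ hsat,
    Finset.card_image_le.trans_eq (by rw [Finset.card_univ, Fintype.card_sum])⟩

open scoped Classical in
/-- Completeness: if a labeling `δ` satisfies every edge of the projection game,
then the collection `{S_{w,δ(w)} : w ∈ V₁ ∪ V₂}` covers the universe `E × B`,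
and it consists of at most `|V₁| + |V₂|` sets. -/
theorem stmt_2 {V₁ V₂ A B : Type} [Fintype V₁] [Fintype V₂] [Fintype A] [Fintype B]
    (E : Set (V₁ × V₂)) (π : V₁ × V₂ → A → A) (C : A → Set B)
    (δ₁ : V₁ → A) (δ₂ : V₂ → A)
    (hsat : ∀ e ∈ E, π e (δ₁ e.1) = δ₂ e.2) :
    (E ×ˢ (Set.univ : Set B) ⊆
      ⋃ w : V₁ ⊕ V₂, projSet E π C (w, Sum.elim δ₁ δ₂ w)) ∧
    (Finset.univ.image
        (fun w : V₁ ⊕ V₂ => projSet E π C (w, Sum.elim δ₁ δ₂ w))).card ≤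
      Fintype.card V₁ + Fintype.card V₂ :=
  stmt_2_general E π C δ₁ δ₂ hsat
end

section
/- Let (G = (V₁, V₂, E), Σ, π) be a projection game, let ℓ ≥ 1 be an integer, and let (B, (C_x)_{x∈Σ}) be an (|Σ|, ℓ)-set system indexed by Σ. Fix an edge e = (u, v) ∈ E with u ∈ V₁, v ∈ V₂, and suppose a collection S of sets of the associated Set Cover instance covers {e} × B. Define L_u = {y ∈ Σ : S_{u,y} ∈ S} and L_v = {x ∈ Σ : S_{v,x} ∈ S}. If |L_u| + |L_v| ≤ ℓ, then there exist a ∈ L_u and b ∈ L_v with π_e(a) = b. -/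
/-!
The sets of `S` that meet `{e} × B` are the `S_{u,y}` with `y ∈ L_u` and the `S_{v,x}` with
`x ∈ L_v`, and on `{e} × B` they are `B ∖ C_{π_e(y)}` and `C_x`. So a cover of `{e} × B` is a
cover of `B` by the sets `C_x` (`x ∈ L_v`) and the complements `B ∖ C_x` (`x ∈ π_e(L_u)`), at
most `|L_u| + |L_v| ≤ ℓ` of them; the set-system property then gives some `x ∈ L_v ∩ π_e(L_u)`.
-/

namespace projSet

variable {V₁ V₂ A B : Type} {E : Set (V₁ × V₂)} {π : V₁ × V₂ → A → A} {C : A → Set B}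

theorem iUnion_union_iUnion_compl_image_eq_univ [DecidableEq A] {u : V₁} {v : V₂}
    {S : Set ((V₁ ⊕ V₂) × A)}
    (hcov : ({(u, v)} : Set (V₁ × V₂)) ×ˢ (Set.univ : Set B) ⊆ ⋃ i ∈ S, projSet E π C i)
    {Lu Lv : Finset A} (hLu : ∀ y, y ∈ Lu ↔ (Sum.inl u, y) ∈ S)
    (hLv : ∀ x, x ∈ Lv ↔ (Sum.inr v, x) ∈ S) :
    ((⋃ x ∈ Lv, C x) ∪ ⋃ x ∈ Lu.image (π (u, v)), (C x)ᶜ) = Set.univ := by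
  refine Set.eq_univ_of_forall fun b => ?_
  obtain ⟨⟨w | w, y⟩, hyS, hb⟩ :=
    Set.mem_iUnion₂.1 (hcov (Set.mk_mem_prod rfl (Set.mem_univ b)))
  · obtain ⟨-, rfl, hbC⟩ := hb
    exact Or.inr <| Set.mem_iUnion₂.2
      ⟨π (u, v) y, Finset.mem_image_of_mem _ ((hLu y).2 hyS), hbC⟩
  · obtain ⟨-, rfl, hbC⟩ := hb
    exact Or.inl <| Set.mem_iUnion₂.2 ⟨y, (hLv y).2 hyS, hbC⟩

end projSet

theorem stmt_3_general {V₁ V₂ A B : Type} [DecidableEq A]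
    (E : Set (V₁ × V₂)) (π : V₁ × V₂ → A → A) (C : A → Set B)
    (ℓ : ℕ)
    -- `(B, (C_x)_{x ∈ A})` is an `(|A|, ℓ)`-set system:
    (hsys : ∀ P N : Finset A, P.card + N.card ≤ ℓ →
      ((⋃ x ∈ P, C x) ∪ ⋃ x ∈ N, (C x)ᶜ) = (Set.univ : Set B) →
      ∃ x ∈ P, x ∈ N)
    (u : V₁) (v : V₂)
    (S : Set ((V₁ ⊕ V₂) × A))
    (hcov : ({(u, v)} : Set (V₁ × V₂)) ×ˢ (Set.univ : Set B) ⊆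
      ⋃ i ∈ S, projSet E π C i)
    (Lu Lv : Finset A)
    (hLu : ∀ y, y ∈ Lu ↔ (Sum.inl u, y) ∈ S)
    (hLv : ∀ x, x ∈ Lv ↔ (Sum.inr v, x) ∈ S)
    (hsize : Lu.card + Lv.card ≤ ℓ) :
    ∃ a ∈ Lu, ∃ b ∈ Lv, π (u, v) a = b := by
  have hcard : Lv.card + (Lu.image (π (u, v))).card ≤ ℓ := by
    have := Lu.card_image_le (f := π (u, v))
    omega
  obtain ⟨x, hxLv, hxImage⟩ :=
    hsys Lv _ hcard (projSet.iUnion_union_iUnion_compl_image_eq_univ hcov hLu hLv)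
  obtain ⟨a, haLu, rfl⟩ := Finset.mem_image.1 hxImage
  exact ⟨a, haLu, _, hxLv, rfl⟩

/-- If `(B, (C_x))` is an `(|A|, ℓ)`-set system, a collection `S` of sets of the
associated Set Cover instance covers `{e} × B` for an edge `e = (u,v)`, and the
label sets `L_u = {y : S_{u,y} ∈ S}`, `L_v = {x : S_{v,x} ∈ S}` satisfy
`|L_u| + |L_v| ≤ ℓ`, then some `a ∈ L_u`, `b ∈ L_v` satisfy `π_e(a) = b`. -/
theorem stmt_3 {V₁ V₂ A B : Type} [Fintype V₁] [Fintype V₂] [Fintype A] [Fintype B]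
    [DecidableEq A]
    (E : Set (V₁ × V₂)) (π : V₁ × V₂ → A → A) (C : A → Set B)
    (ℓ : ℕ) (hℓ : 1 ≤ ℓ)
    -- `(B, (C_x)_{x ∈ A})` is an `(|A|, ℓ)`-set system:
    (hsys : ∀ P N : Finset A, P.card + N.card ≤ ℓ →
      ((⋃ x ∈ P, C x) ∪ ⋃ x ∈ N, (C x)ᶜ) = (Set.univ : Set B) →
      ∃ x ∈ P, x ∈ N)
    (u : V₁) (v : V₂) (hE : (u, v) ∈ E)
    (S : Set ((V₁ ⊕ V₂) × A))
    (hcov : ({(u, v)} : Set (V₁ × V₂)) ×ˢ (Set.univ : Set B) ⊆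
      ⋃ i ∈ S, projSet E π C i)
    (Lu Lv : Finset A)
    (hLu : ∀ y, y ∈ Lu ↔ (Sum.inl u, y) ∈ S)
    (hLv : ∀ x, x ∈ Lv ↔ (Sum.inr v, x) ∈ S)
    (hsize : Lu.card + Lv.card ≤ ℓ) :
    ∃ a ∈ Lu, ∃ b ∈ Lv, π (u, v) a = b :=
  stmt_3_general E π C ℓ hsys u v S hcov Lu Lv hLu hLv hsize
end

section
/- Let V₁ and V₂ be disjoint finite sets, Σ a finite alphabet, and for each w ∈ V₁ ∪ V₂ let L_w ⊆ Σ be a nonempty finite set of labels. Let F be a finite set of constraint edges, where each f ∈ F has endpoints u_f ∈ V₁ and v_f ∈ V₂ and a projection π_f : Σ → Σ, and suppose that for each f ∈ F there exist a ∈ L_{u_f} and b ∈ L_{v_f} with π_f(a) = b. Then there exists a labeling φ with φ(w) ∈ L_w for every w ∈ V₁ ∪ V₂ such that the number of f ∈ F with π_f(φ(u_f)) = φ(v_f) is at least Σ_{f∈F} 1/(|L_{u_f}|·|L_{v_f}|). In particular, if every f ∈ F satisfies |L_{u_f}| ≤ ℓ/2 and |L_{v_f}| ≤ ℓ/2, then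 φ satisfies at least (4/ℓ²)·|F| of the edges of F. -/
/-!
Label every vertex independently and uniformly at random from its list. An edge `f` is satisfied
whenever `u_f` receives the label `a` and `v_f` the label `b = π_f a` promised by the hypothesis,
which happens with probability `1 / (|L_{u_f}| |L_{v_f}|)`. By linearity of expectation the expected
number of satisfied edges is at least the sum of these probabilities, so some labeling attains it.
The probability space is the finite set of all admissible labelings, so probabilities are counts.
-/

open Finset

lemma card_piFinset_eq_card_mul_card_filter {V A : Type*} [Fintype V] [DecidableEq V]
    [DecidableEq A] (L : V → Finset A) {x : V} {a : A} (ha : a ∈ L x) :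
    #(Fintype.piFinset L) = #(L x) * #{φ ∈ Fintype.piFinset L | φ x = a} := by
  rw [Fintype.card_filter_piFinset_eq_of_mem L x ha, Fintype.card_piFinset,
    ← mul_prod_erase univ _ (mem_univ x)]

lemma card_piFinset_product_le_mul_card_filter {V₁ V₂ A B : Type*} [Fintype V₁] [Fintype V₂]
    [DecidableEq V₁] [DecidableEq V₂] [DecidableEq A] [DecidableEq B]
    (L₁ : V₁ → Finset A) (L₂ : V₂ → Finset B) (R : A → B → Prop) [DecidableRel R]
    {x : V₁} {y : V₂} {a : A} {b : B} (ha : a ∈ L₁ x) (hb : b ∈ L₂ y) (hab : R a b) :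
    #(Fintype.piFinset L₁ ×ˢ Fintype.piFinset L₂) ≤
      #(L₁ x) * #(L₂ y) *
        #{p ∈ Fintype.piFinset L₁ ×ˢ Fintype.piFinset L₂ | R (p.1 x) (p.2 y)} := by
  rw [card_product, card_piFinset_eq_card_mul_card_filter L₁ ha,
    card_piFinset_eq_card_mul_card_filter L₂ hb, mul_mul_mul_comm,
    ← card_product (Finset.filter _ _)]
  refine Nat.mul_le_mul_left _ (card_le_card fun p hp => ?_)
  simp only [mem_product, mem_filter] at hp ⊢
  exact ⟨⟨hp.1.1, hp.2.1⟩, hp.1.2 ▸ hp.2.2 ▸ hab⟩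

/-- The first-moment method for the uniform distribution on `Ω`. -/
lemma exists_sum_le_card_filter {α ι : Type*} {Ω : Finset α} (hΩ : Ω.Nonempty) (F : Finset ι)
    (P : ι → α → Prop) [∀ f p, Decidable (P f p)] (w : ι → ℝ)
    (hw : ∀ f ∈ F, #Ω * w f ≤ #{p ∈ Ω | P f p}) :
    ∃ p ∈ Ω, ∑ f ∈ F, w f ≤ #{f ∈ F | P f p} := by
  apply exists_le_of_sum_le hΩ
  calc ∑ _ ∈ Ω, ∑ f ∈ F, w f = ∑ f ∈ F, #Ω * w f := by
        rw [sum_const, nsmul_eq_mul, mul_sum]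
    _ ≤ ∑ f ∈ F, (#{p ∈ Ω | P f p} : ℝ) := sum_le_sum hw
    _ = ∑ p ∈ Ω, (#{f ∈ F | P f p} : ℝ) := by
        exact_mod_cast sum_card_bipartiteAbove_eq_sum_card_bipartiteBelow P

lemma four_div_sq_le_one_div_mul {x y ℓ : ℝ} (hx : 0 < x) (hy : 0 < y) (hxℓ : x ≤ ℓ / 2)
    (hyℓ : y ≤ ℓ / 2) : 4 / ℓ ^ 2 ≤ 1 / (x * y) := by
  calc 4 / ℓ ^ 2 = 1 / (ℓ / 2 * (ℓ / 2)) := by ring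
    _ ≤ 1 / (x * y) := by gcongr; linarith

theorem stmt_4_general {V₁ V₂ A ι : Type} [Fintype V₁] [Fintype V₂]
    [DecidableEq A]
    (L₁ : V₁ → Finset A) (L₂ : V₂ → Finset A)
    (hL₁ : ∀ w, (L₁ w).Nonempty) (hL₂ : ∀ w, (L₂ w).Nonempty)
    (F : Finset ι) (u : ι → V₁) (v : ι → V₂) (π : ι → A → A)
    (hex : ∀ f ∈ F, ∃ a ∈ L₁ (u f), ∃ b ∈ L₂ (v f), π f a = b) :
    ∃ (φ₁ : V₁ → A) (φ₂ : V₂ → A),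
      (∀ w, φ₁ w ∈ L₁ w) ∧ (∀ w, φ₂ w ∈ L₂ w) ∧
      (∑ f ∈ F, (1 : ℝ) / (((L₁ (u f)).card : ℝ) * ((L₂ (v f)).card : ℝ))) ≤
        ((F.filter fun f => π f (φ₁ (u f)) = φ₂ (v f)).card : ℝ) ∧
      ∀ ℓ : ℝ, 0 < ℓ →
        (∀ f ∈ F, ((L₁ (u f)).card : ℝ) ≤ ℓ / 2 ∧ ((L₂ (v f)).card : ℝ) ≤ ℓ / 2) →
        4 / ℓ ^ 2 * (F.card : ℝ) ≤
          ((F.filter fun f => π f (φ₁ (u f)) = φ₂ (v f)).card : ℝ) := by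
  classical
  have hcard₁ (f : ι) : (0 : ℝ) < #(L₁ (u f)) := by exact_mod_cast (hL₁ (u f)).card_pos
  have hcard₂ (f : ι) : (0 : ℝ) < #(L₂ (v f)) := by exact_mod_cast (hL₂ (v f)).card_pos
  have hΩ : (Fintype.piFinset L₁ ×ˢ Fintype.piFinset L₂).Nonempty :=
    (Fintype.piFinset_nonempty.2 hL₁).product (Fintype.piFinset_nonempty.2 hL₂)
  obtain ⟨⟨φ₁, φ₂⟩, hφ, hsat⟩ := exists_sum_le_card_filter hΩ F
    (fun f p => π f (p.1 (u f)) = p.2 (v f)) _ fun f hf => by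
      obtain ⟨a, ha, b, hb, hab⟩ := hex f hf
      rw [mul_one_div, div_le_iff₀ (mul_pos (hcard₁ f) (hcard₂ f)), mul_comm]
      exact_mod_cast
        card_piFinset_product_le_mul_card_filter L₁ L₂ (fun a b => π f a = b) ha hb hab
  simp only [mem_product, Fintype.mem_piFinset] at hφ
  refine ⟨φ₁, φ₂, hφ.1, hφ.2, hsat, fun ℓ _ hℓ => le_trans ?_ hsat⟩
  rw [mul_comm, ← nsmul_eq_mul, ← sum_const]
  exact sum_le_sum fun f hf =>
    four_div_sq_le_one_div_mul (hcard₁ f) (hcard₂ f) (hℓ f hf).1 (hℓ f hf).2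

/-- The random-labeling step: if each constraint edge `f` (with endpoints
`u_f ∈ V₁`, `v_f ∈ V₂` and projection `π_f`) has some `a ∈ L_{u_f}`,
`b ∈ L_{v_f}` with `π_f(a) = b`, then some labeling `φ` with `φ(w) ∈ L_w`
satisfies at least `∑_f 1/(|L_{u_f}|·|L_{v_f}|)` of the edges; in particular
at least `(4/ℓ²)·|F|` edges when all label sets have size at most `ℓ/2`. -/
theorem stmt_4 {V₁ V₂ A ι : Type} [Fintype V₁] [Fintype V₂] [Fintype A]
    [DecidableEq A]
    (L₁ : V₁ → Finset A) (L₂ : V₂ → Finset A)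
    (hL₁ : ∀ w, (L₁ w).Nonempty) (hL₂ : ∀ w, (L₂ w).Nonempty)
    (F : Finset ι) (u : ι → V₁) (v : ι → V₂) (π : ι → A → A)
    (hex : ∀ f ∈ F, ∃ a ∈ L₁ (u f), ∃ b ∈ L₂ (v f), π f a = b) :
    ∃ (φ₁ : V₁ → A) (φ₂ : V₂ → A),
      (∀ w, φ₁ w ∈ L₁ w) ∧ (∀ w, φ₂ w ∈ L₂ w) ∧
      (∑ f ∈ F, (1 : ℝ) / (((L₁ (u f)).card : ℝ) * ((L₂ (v f)).card : ℝ))) ≤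
        ((F.filter fun f => π f (φ₁ (u f)) = φ₂ (v f)).card : ℝ) ∧
      ∀ ℓ : ℝ, 0 < ℓ →
        (∀ f ∈ F, ((L₁ (u f)).card : ℝ) ≤ ℓ / 2 ∧ ((L₂ (v f)).card : ℝ) ≤ ℓ / 2) →
        4 / ℓ ^ 2 * (F.card : ℝ) ≤
          ((F.filter fun f => π f (φ₁ (u f)) = φ₂ (v f)).card : ℝ) :=
  stmt_4_general L₁ L₂ hL₁ hL₂ F u v π hex
end

section
/- Let (G = (V₁, V₂, E), Σ, π) be a projection game in which every vertex of V₁ ∪ V₂ has degree exactly d ≥ 1, Σ is nonempty, ℓ ≥ 1 is an integer, and (B, (C_x)_{x∈Σ}) is an (|Σ|, ℓ)-set system indexed by Σ. If the associated Set Cover instance has a set cover S with |S| < (ℓ/8)·(|V₁| + |V₂|), then there exists a labeling φ : V₁ ∪ V₂ → Σ that satisfies at least (2/ℓ²)·|E| edges of G. Equivalently, if every labeling satisfies fewer than (2/ℓ²)·|E| edges, then every set cover of the associated instance has size at least (ℓ/8)·(|V₁| + |V₂|). -/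
open Finset Fintype

theorem Finset.sum_comp_eq_nsmul_sum {α β M : Type*} [Fintype β] [DecidableEq β]
    [AddCommMonoid M] {s : Finset α} {g : α → β} {d : ℕ} (hg : ∀ b, #{a ∈ s | g a = b} = d)
    (f : β → M) : ∑ a ∈ s, f (g a) = d • ∑ b, f b := by
  rw [← sum_fiberwise s g, smul_sum]
  refine sum_congr rfl fun b _ => ?_
  rw [sum_congr rfl fun a ha => congrArg f (mem_filter.1 ha).2, sum_const, hg]

theorem Finset.card_eq_mul_card_of_card_fiber_eq {α β : Type*} [Fintype β] [DecidableEq β]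
    {s : Finset α} {g : α → β} {d : ℕ} (hg : ∀ b, #{a ∈ s | g a = b} = d) :
    #s = d * Fintype.card β := by
  simpa using sum_comp_eq_nsmul_sum hg fun _ => (1 : ℕ)

theorem Finset.card_filter_lt_mul_le_sum {α : Type*} (s : Finset α) (f : α → ℕ) (c : ℕ) :
    #{a ∈ s | c < f a} * (c + 1) ≤ ∑ a ∈ s, f a :=
  calc #{a ∈ s | c < f a} * (c + 1) = ∑ _a ∈ s with c < f _a, (c + 1) := by
        rw [sum_const, smul_eq_mul]
    _ ≤ ∑ a ∈ s with c < f a, f a := sum_le_sum fun a ha => (mem_filter.1 ha).2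
    _ ≤ ∑ a ∈ s, f a := sum_le_sum_of_subset (filter_subset _ _)

theorem Finset.exists_card_le_mul_card_bipartiteBelow {α β : Type*} {s : Finset α}
    {t : Finset β} (ht : t.Nonempty) (r : α → β → Prop) [∀ a b, Decidable (r a b)] (m : ℕ)
    (h : ∀ a ∈ s, #t ≤ m * #(t.bipartiteAbove r a)) :
    ∃ b ∈ t, #s ≤ m * #(s.bipartiteBelow r b) := by
  refine exists_le_of_sum_le ht ?_
  calc ∑ _b ∈ t, #s = ∑ _a ∈ s, #t := by simp only [sum_const, smul_eq_mul, mul_comm]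
    _ ≤ ∑ a ∈ s, m * #(t.bipartiteAbove r a) := sum_le_sum h
    _ = ∑ b ∈ t, m * #(s.bipartiteBelow r b) := by
      rw [← mul_sum, ← mul_sum, sum_card_bipartiteAbove_eq_sum_card_bipartiteBelow]

theorem Fintype.card_piFinset_eq_card_mul_card_filter {ι : Type*} {α : ι → Type*}
    [DecidableEq ι] [Fintype ι] [∀ i, DecidableEq (α i)] (t : ∀ i, Finset (α i)) {i : ι}
    {a : α i} (ha : a ∈ t i) : #(piFinset t) = #(t i) * #{f ∈ piFinset t | f i = a} := by
  rw [card_filter_piFinset_eq_of_mem t i ha, card_piFinset,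
    mul_prod_erase _ (fun j => #(t j)) (mem_univ i)]

theorem Fintype.card_piFinset_prod_eq_mul_card_filter {ι κ α β : Type*} [Fintype ι]
    [Fintype κ] [DecidableEq ι] [DecidableEq κ] [DecidableEq α] [DecidableEq β]
    (t₁ : ι → Finset α) (t₂ : κ → Finset β) {i : ι} {k : κ} {a : α} {b : β} (ha : a ∈ t₁ i)
    (hb : b ∈ t₂ k) :
    #(piFinset t₁ ×ˢ piFinset t₂) =
      #(t₁ i) * #(t₂ k) * #{p ∈ piFinset t₁ ×ˢ piFinset t₂ | p.1 i = a ∧ p.2 k = b} := by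
  rw [filter_product (fun f : ι → α => f i = a) fun g : κ → β => g k = b, card_product,
    card_product, card_piFinset_eq_card_mul_card_filter t₁ ha,
    card_piFinset_eq_card_mul_card_filter t₂ hb]
  ring

theorem Nat.mul_le_sq_div_four {a b c : ℕ} (h : a + b ≤ c) : a * b ≤ c ^ 2 / 4 := by
  rw [Nat.le_div_iff_mul_le (by norm_num)]
  zify at h ⊢
  nlinarith [sq_nonneg ((a : ℤ) - b)]

section Labelings

variable {V₁ V₂ W A B : Type*}

def satisfiedEdges [DecidableEq A] (E : Finset (V₁ × V₂)) (π : V₁ × V₂ → A → A)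
    (φ₁ : V₁ → A) (φ₂ : V₂ → A) : Finset (V₁ × V₂) :=
  {e ∈ E | π e (φ₁ e.1) = φ₂ e.2}

def IsSetSystem (C : A → Set B) (ℓ : ℕ) : Prop :=
  ∀ P N : Finset A, #P + #N ≤ ℓ →
    ((⋃ x ∈ P, C x) ∪ ⋃ x ∈ N, (C x)ᶜ) = Set.univ → ∃ x ∈ P, x ∈ N

def candidates [DecidableEq W] [DecidableEq A] (S : Finset (W × A)) (w : W) : Finset A :=
  {i ∈ S | i.1 = w}.image Prod.snd

theorem mem_candidates [DecidableEq W] [DecidableEq A] {S : Finset (W × A)} {w : W} {a : A} :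
    a ∈ candidates S w ↔ (w, a) ∈ S := by
  simp [candidates]

theorem sum_card_candidates_le [Fintype W] [DecidableEq W] [DecidableEq A]
    (S : Finset (W × A)) :
    ∑ w, #(candidates S w) ≤ #S :=
  calc ∑ w, #(candidates S w) ≤ ∑ w, #{i ∈ S | i.1 = w} := sum_le_sum fun _ _ => card_image_le
    _ = #S := (card_eq_sum_card_fiberwise fun _ _ => mem_univ _).symm

theorem exists_card_le_mul_card_satisfiedEdges [Fintype V₁] [Fintype V₂] [DecidableEq V₁]
    [DecidableEq V₂] [Fintype A] [DecidableEq A] [Nonempty A] {E G : Finset (V₁ × V₂)}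
    (hGE : G ⊆ E) (π : V₁ × V₂ → A → A) (t₁ : V₁ → Finset A) (t₂ : V₂ → Finset A) {m : ℕ}
    (hm : ∀ e ∈ G, #(t₁ e.1) * #(t₂ e.2) ≤ m)
    (hsat : ∀ e ∈ G, ∃ y ∈ t₁ e.1, π e y ∈ t₂ e.2) :
    ∃ φ₁ φ₂, #G ≤ m * #(satisfiedEdges E π φ₁ φ₂) := by
  -- average over all labelings that pick a candidate wherever there is one
  let b₁ : V₁ → Finset A := fun u => if (t₁ u).Nonempty then t₁ u else univ
  let b₂ : V₂ → Finset A := fun v => if (t₂ v).Nonempty then t₂ v else univ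
  have hD : (piFinset b₁ ×ˢ piFinset b₂).Nonempty := by
    refine (piFinset_nonempty.2 fun u => ?_).product (piFinset_nonempty.2 fun v => ?_)
    · dsimp only [b₁]; split_ifs with h; exacts [h, univ_nonempty]
    · dsimp only [b₂]; split_ifs with h; exacts [h, univ_nonempty]
  obtain ⟨p, -, hp⟩ := exists_card_le_mul_card_bipartiteBelow hD
    (fun e p => π e (p.1 e.1) = p.2 e.2) m fun e he => by
      obtain ⟨y, hy, hx⟩ := hsat e he
      have hb₁ : b₁ e.1 = t₁ e.1 := if_pos ⟨y, hy⟩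
      have hb₂ : b₂ e.2 = t₂ e.2 := if_pos ⟨π e y, hx⟩
      rw [card_piFinset_prod_eq_mul_card_filter b₁ b₂ (hb₁ ▸ hy) (hb₂ ▸ hx), hb₁, hb₂]
      refine Nat.mul_le_mul (hm e he) (card_le_card (monotone_filter_right _ ?_))
      rintro q - ⟨hqy, hqx⟩
      rw [hqy, hqx]
  exact ⟨p.1, p.2,
    hp.trans (Nat.mul_le_mul_left m (card_le_card (filter_subset_filter _ hGE)))⟩

end Labelings

section SetCover

variable {V₁ V₂ A B : Type} [DecidableEq V₁] [DecidableEq V₂] [DecidableEq A]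
  {E : Finset (V₁ × V₂)} {π : V₁ × V₂ → A → A} {C : A → Set B} {S : Finset ((V₁ ⊕ V₂) × A)}

theorem iUnion_candidates_eq_univ {e : V₁ × V₂}
    (hcov : ∀ b : B, ∃ i ∈ S, (e, b) ∈ projSet (↑E) π C i) :
    ((⋃ x ∈ candidates S (.inr e.2), C x) ∪
      ⋃ x ∈ (candidates S (.inl e.1)).image (π e), (C x)ᶜ) = Set.univ := by
  ext b
  simp only [Set.mem_union, Set.mem_iUnion, Set.mem_compl_iff, exists_prop, mem_image,
    Set.mem_univ, iff_true]
  obtain ⟨⟨w, x⟩, hS, hb⟩ := hcov b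
  cases w with
  | inl u =>
    obtain ⟨-, rfl, hb⟩ := hb
    exact Or.inr ⟨π e x, ⟨x, mem_candidates.2 hS, rfl⟩, hb⟩
  | inr v =>
    obtain ⟨-, rfl, hb⟩ := hb
    exact Or.inl ⟨x, mem_candidates.2 hS, hb⟩

theorem exists_candidate_satisfying {ℓ : ℕ} (hC : IsSetSystem C ℓ) {e : V₁ × V₂}
    (hcov : ∀ b : B, ∃ i ∈ S, (e, b) ∈ projSet (↑E) π C i)
    (hℓ : #(candidates S (.inl e.1)) + #(candidates S (.inr e.2)) ≤ ℓ) :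
    ∃ y ∈ candidates S (.inl e.1), π e y ∈ candidates S (.inr e.2) := by
  have hcard := card_image_le (s := candidates S (.inl e.1)) (f := π e)
  obtain ⟨x, hx, hxy⟩ := hC _ _ (by omega) (iUnion_candidates_eq_univ hcov)
  obtain ⟨y, hy, rfl⟩ := mem_image.1 hxy
  exact ⟨y, hy, hx⟩

variable [Fintype V₁] [Fintype V₂] {d : ℕ}

theorem sum_card_candidates_endpoints_le (hreg₁ : ∀ u : V₁, #{e ∈ E | e.1 = u} = d)
    (hreg₂ : ∀ v : V₂, #{e ∈ E | e.2 = v} = d) :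
    ∑ e ∈ E, (#(candidates S (.inl e.1)) + #(candidates S (.inr e.2))) ≤ d * #S := by
  rw [sum_add_distrib,
    sum_comp_eq_nsmul_sum (g := Prod.fst) hreg₁ fun u => #(candidates S (.inl u)),
    sum_comp_eq_nsmul_sum (g := Prod.snd) hreg₂ fun v => #(candidates S (.inr v)),
    smul_eq_mul, smul_eq_mul, ← mul_add, ← Fintype.sum_sum_type fun w => #(candidates S w)]
  exact Nat.mul_le_mul_left d (sum_card_candidates_le S)

theorem three_mul_card_le_four_mul_card_filter_candidates {ℓ : ℕ}
    (hreg₁ : ∀ u : V₁, #{e ∈ E | e.1 = u} = d) (hreg₂ : ∀ v : V₂, #{e ∈ E | e.2 = v} = d)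
    (hS : 8 * #S < ℓ * (Fintype.card V₁ + Fintype.card V₂)) :
    3 * #E ≤ 4 * #{e ∈ E | #(candidates S (.inl e.1)) + #(candidates S (.inr e.2)) ≤ ℓ} := by
  set w : V₁ × V₂ → ℕ := fun e => #(candidates S (.inl e.1)) + #(candidates S (.inr e.2))
  have hsum : ∑ e ∈ E, w e ≤ d * #S := sum_card_candidates_endpoints_le hreg₁ hreg₂
  have hmarkov := card_filter_lt_mul_le_sum E w ℓ
  have hsplit : #{e ∈ E | w e ≤ ℓ} + #{e ∈ E | ℓ < w e} = #E := by
    rw [← card_filter_add_card_filter_not (s := E) fun e => w e ≤ ℓ]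
    simp only [not_le]
  have hE₁ := card_eq_mul_card_of_card_fiber_eq hreg₁
  have hE₂ := card_eq_mul_card_of_card_fiber_eq hreg₂
  obtain rfl | hd := Nat.eq_zero_or_pos d
  · simp [hE₁]
  have hdS : 8 * (d * #S) < 2 * ℓ * #E :=
    calc 8 * (d * #S) = d * (8 * #S) := by ring
      _ < d * (ℓ * (Fintype.card V₁ + Fintype.card V₂)) := Nat.mul_lt_mul_of_pos_left hS hd
      _ = 2 * ℓ * #E := by rw [mul_left_comm, mul_add, ← hE₁, ← hE₂]; ring
  have hbad : 4 * #{e ∈ E | ℓ < w e} < #E := by nlinarith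
  change 3 * #E ≤ 4 * #{e ∈ E | w e ≤ ℓ}
  omega

end SetCover

theorem stmt_6_general {V₁ V₂ A B : Type} [Fintype V₁] [Fintype V₂] [Fintype A]
    [DecidableEq V₁] [DecidableEq V₂] [DecidableEq A] [Nonempty A]
    (E : Finset (V₁ × V₂)) (π : V₁ × V₂ → A → A) (C : A → Set B)
    (d ℓ : ℕ)
    (hreg₁ : ∀ u : V₁, (E.filter fun e => e.1 = u).card = d)
    (hreg₂ : ∀ v : V₂, (E.filter fun e => e.2 = v).card = d)
    -- `(B, (C_x)_{x ∈ A})` is an `(|A|, ℓ)`-set system: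
    (hsys : ∀ P N : Finset A, P.card + N.card ≤ ℓ →
      ((⋃ x ∈ P, C x) ∪ ⋃ x ∈ N, (C x)ᶜ) = (Set.univ : Set B) →
      ∃ x ∈ P, x ∈ N)
    -- `S` is a set cover of the associated instance:
    (S : Finset ((V₁ ⊕ V₂) × A))
    (hcov : ∀ e ∈ E, ∀ b : B,
      ∃ i ∈ S, ((e, b) : (V₁ × V₂) × B) ∈ projSet (↑E) π C i)
    (hsize : (S.card : ℝ) <
      (ℓ : ℝ) / 8 * ((Fintype.card V₁ + Fintype.card V₂ : ℕ) : ℝ)) :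
    ∃ (φ₁ : V₁ → A) (φ₂ : V₂ → A),
      2 / (ℓ : ℝ) ^ 2 * (E.card : ℝ) ≤
        ((E.filter fun e => π e (φ₁ e.1) = φ₂ e.2).card : ℝ) := by
  have hS : 8 * #S < ℓ * (Fintype.card V₁ + Fintype.card V₂) := by
    have h : (8 * #S : ℝ) < ℓ * ((Fintype.card V₁ + Fintype.card V₂ : ℕ) : ℝ) := by linarith
    exact_mod_cast h
  have hℓ : 0 < ℓ := Nat.pos_of_ne_zero fun h => by simp [h] at hS
  obtain ⟨φ₁, φ₂, hφ⟩ := exists_card_le_mul_card_satisfiedEdges (filter_subset _ E) π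
    (fun u => candidates S (.inl u)) (fun v => candidates S (.inr v)) (m := ℓ ^ 2 / 4)
    (fun e he => Nat.mul_le_sq_div_four (mem_filter.1 he).2)
    fun e he => exists_candidate_satisfying hsys (hcov e (mem_filter.1 he).1) (mem_filter.1 he).2
  have hgood := three_mul_card_le_four_mul_card_filter_candidates hreg₁ hreg₂ hS
  have hcount : 2 * #E ≤ ℓ ^ 2 * #(satisfiedEdges E π φ₁ φ₂) := by
    have := Nat.div_mul_le_self (ℓ ^ 2) 4
    nlinarith
  refine ⟨φ₁, φ₂, ?_⟩
  rw [div_mul_eq_mul_div, div_le_iff₀ (by positivity)]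
  exact_mod_cast (by linarith : 2 * #E ≤ #(satisfiedEdges E π φ₁ φ₂) * ℓ ^ 2)

/-- Soundness of the Projection Games → Set Cover reduction: for a `d`-regular
projection game with an `(|A|, ℓ)`-set system, if the associated Set Cover
instance has a set cover of size `< (ℓ/8)(|V₁| + |V₂|)`, then some labeling
satisfies at least a `2/ℓ²` fraction of the edges. -/
theorem stmt_6 {V₁ V₂ A B : Type} [Fintype V₁] [Fintype V₂] [Fintype A]
    [Fintype B] [DecidableEq V₁] [DecidableEq V₂] [DecidableEq A] [Nonempty A]
    (E : Finset (V₁ × V₂)) (π : V₁ × V₂ → A → A) (C : A → Set B)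
    (d ℓ : ℕ) (hd : 1 ≤ d) (hℓ : 1 ≤ ℓ)
    (hreg₁ : ∀ u : V₁, (E.filter fun e => e.1 = u).card = d)
    (hreg₂ : ∀ v : V₂, (E.filter fun e => e.2 = v).card = d)
    -- `(B, (C_x)_{x ∈ A})` is an `(|A|, ℓ)`-set system:
    (hsys : ∀ P N : Finset A, P.card + N.card ≤ ℓ →
      ((⋃ x ∈ P, C x) ∪ ⋃ x ∈ N, (C x)ᶜ) = (Set.univ : Set B) →
      ∃ x ∈ P, x ∈ N)
    -- `S` is a set cover of the associated instance:
    (S : Finset ((V₁ ⊕ V₂) × A))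
    (hcov : ∀ e ∈ E, ∀ b : B,
      ∃ i ∈ S, ((e, b) : (V₁ × V₂) × B) ∈ projSet (↑E) π C i)
    (hsize : (S.card : ℝ) <
      (ℓ : ℝ) / 8 * ((Fintype.card V₁ + Fintype.card V₂ : ℕ) : ℝ)) :
    ∃ (φ₁ : V₁ → A) (φ₂ : V₂ → A),
      2 / (ℓ : ℝ) ^ 2 * (E.card : ℝ) ≤
        ((E.filter fun e => π e (φ₁ e.1) = φ₂ e.2).card : ℝ) :=
  stmt_6_general E π C d ℓ hreg₁ hreg₂ hsys S hcov hsize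
end

section
/- Let G = (V, E) be a finite directed graph, ℓ ≥ 2, and let t₁, …, t_ℓ ∈ V be distinct terminals. Construct G* on vertex set V ∪ {r₁, …, r_ℓ} ∪ {s₁, …, s_ℓ} (the r_i and s_i being 2ℓ new distinct vertices) with edge set E* = E ∪ {(r_i, t_i) : i ∈ [ℓ]} ∪ {(t_i, s_i) : i ∈ [ℓ]}, and let T* = {(r_i, s_j) : 1 ≤ i, j ≤ ℓ, i ≠ j}. Then for every integer p: there exists E' ⊆ E with |E'| ≤ p such that for every ordered pair of distinct terminals t_i, t_j, t_j is E'-reachable from t_i, if and only if there exists E'' ⊆ E* with |E''| ≤ p + 2ℓ such that for every (r_i, s_j) ∈ T*, s_j is E''-reachable from r_i. -/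
/-!
Given a strongly connected solution `E'` on the terminals, adding the `2ℓ` edges `rᵢ → tᵢ`
and `tᵢ → sᵢ` connects every `rᵢ` to every `sⱼ`. Conversely, a feasible solution `F ⊆ E*`
must contain all `2ℓ` new edges, since `rᵢ → tᵢ` is the only edge leaving `rᵢ` and
`tᵢ → sᵢ` the only edge entering `sᵢ`. A path from `rᵢ` to `sⱼ` leaves `rᵢ` to `tᵢ`, stays in
`G` until it first leaves `V`, which can only be along some `tₖ → sₖ`, and since `sₖ` has no
outgoing edge, `k = j`; so the edges of `F` inside `V` connect `tᵢ` to `tⱼ`.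
-/

/-- `b` is `E'`-reachable from `a`: there is a (possibly empty) directed path
from `a` to `b` all of whose edges lie in `E'`. -/
def Reach {V : Type} (E' : Finset (V × V)) (a b : V) : Prop :=
  Relation.ReflTransGen (fun x y => (x, y) ∈ E') a b

open Finset

theorem Reach.map {V W : Type} {E : Finset (V × V)} {F : Finset (W × W)} (f : V → W)
    (hf : ∀ a b, (a, b) ∈ E → (f a, f b) ∈ F) {a b : V} (h : Reach E a b) :
    Reach F (f a) (f b) :=
  Relation.ReflTransGen.lift f hf _ _ h

section InlPart

variable {V β : Type}

noncomputable def inlPart (F : Finset ((V ⊕ β) × (V ⊕ β))) : Finset (V × V) :=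
  F.preimage (Prod.map Sum.inl Sum.inl)
    (Sum.inl_injective.prodMap Sum.inl_injective).injOn

@[simp]
theorem mem_inlPart {F : Finset ((V ⊕ β) × (V ⊕ β))} {a b : V} :
    (a, b) ∈ inlPart F ↔ (Sum.inl a, Sum.inl b) ∈ F :=
  mem_preimage

theorem image_inlPart_subset [DecidableEq V] [DecidableEq β]
    (F : Finset ((V ⊕ β) × (V ⊕ β))) : (inlPart F).image (Prod.map Sum.inl Sum.inl) ⊆ F := by
  rintro _ h
  obtain ⟨⟨a, b⟩, hab, rfl⟩ := mem_image.1 h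
  exact mem_inlPart.1 hab

theorem Reach.exists_exit {F : Finset ((V ⊕ β) × (V ⊕ β))} {w : V} {b : β}
    (h : Reach F (.inl w) (.inr b)) :
    ∃ v c, Reach (inlPart F) w v ∧ (.inl v, .inr c) ∈ F ∧ Reach F (.inr c) (.inr b) := by
  suffices ∀ x, Reach F x (.inr b) → ∀ w, x = .inl w →
      ∃ v c, Reach (inlPart F) w v ∧ (.inl v, .inr c) ∈ F ∧ Reach F (.inr c) (.inr b) from
    this _ h w rfl
  intro x hx
  induction hx using Relation.ReflTransGen.head_induction_on with
  | refl => rintro w ⟨⟩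
  | @head x y hxy hyb ih =>
    rintro w rfl
    cases y with
    | inl u =>
      obtain ⟨v, c, hwv, hvc, hcb⟩ := ih u rfl
      exact ⟨v, c, .head (mem_inlPart.2 hxy) hwv, hvc, hcb⟩
    | inr c => exact ⟨w, c, .refl, hxy, hyb⟩

end InlPart

section StarGraph

variable {V ι : Type} [DecidableEq V] [Fintype ι] [DecidableEq ι]

/-- The new edges `rᵢ → tᵢ` and `tᵢ → sᵢ`, with `rᵢ = inr (inl i)` and `sᵢ = inr (inr i)`. -/
def terminalEdges (t : ι → V) : Finset ((V ⊕ (ι ⊕ ι)) × (V ⊕ (ι ⊕ ι))) :=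
  univ.image (fun i => (.inr (.inl i), .inl (t i))) ∪
    univ.image (fun i => (.inl (t i), .inr (.inr i)))

def starEdges (E : Finset (V × V)) (t : ι → V) : Finset ((V ⊕ (ι ⊕ ι)) × (V ⊕ (ι ⊕ ι))) :=
  E.image (Prod.map Sum.inl Sum.inl) ∪ terminalEdges t

theorem card_terminalEdges (t : ι → V) : #(terminalEdges t) = 2 * Fintype.card ι := by
  rw [terminalEdges, card_union_of_disjoint, card_image_of_injective, card_image_of_injective,
    card_univ, two_mul]
  · intro i j h
    simpa using congrArg Prod.snd h
  · intro i j h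
    simpa using congrArg Prod.fst h
  · simp [disjoint_left]

theorem disjoint_image_terminalEdges (X : Finset (V × V)) (t : ι → V) :
    Disjoint (X.image (Prod.map Sum.inl Sum.inl)) (terminalEdges t) := by
  simp [disjoint_left, terminalEdges]

theorem starEdges_mono {E' E : Finset (V × V)} (h : E' ⊆ E) (t : ι → V) :
    starEdges E' t ⊆ starEdges E t :=
  union_subset_union (image_subset_image h) subset_rfl

theorem card_starEdges_le (E : Finset (V × V)) (t : ι → V) :
    #(starEdges E t) ≤ #E + 2 * Fintype.card ι :=
  calc #(starEdges E t) ≤ #(E.image (Prod.map Sum.inl Sum.inl)) + #(terminalEdges t) :=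
        card_union_le _ _
    _ ≤ #E + 2 * Fintype.card ι := by rw [card_terminalEdges]; gcongr; exact card_image_le

theorem reach_starEdges_of_reach {E : Finset (V × V)} {t : ι → V} {i j : ι}
    (h : Reach E (t i) (t j)) : Reach (starEdges E t) (.inr (.inl i)) (.inr (.inr j)) := by
  have hV : Reach (starEdges E t) (.inl (t i)) (.inl (t j)) :=
    h.map Sum.inl fun a b hab => mem_union_left _ (mem_image_of_mem _ hab)
  refine Relation.ReflTransGen.head ?_ (hV.tail ?_) <;> simp [starEdges, terminalEdges]

variable {E : Finset (V × V)} {t : ι → V}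

theorem mem_starEdges_inl_inl {a b : V} :
    (.inl a, .inl b) ∈ starEdges E t ↔ (a, b) ∈ E := by
  simp [starEdges, terminalEdges]

theorem eq_of_mem_starEdges_source {i : ι} {c : V ⊕ (ι ⊕ ι)}
    (h : (.inr (.inl i), c) ∈ starEdges E t) : c = .inl (t i) := by
  simp only [starEdges, terminalEdges, mem_union, mem_image] at h
  aesop

theorem eq_of_mem_starEdges_sink {j : ι} {c : V ⊕ (ι ⊕ ι)}
    (h : (c, .inr (.inr j)) ∈ starEdges E t) : c = .inl (t j) := by
  simp only [starEdges, terminalEdges, mem_union, mem_image] at h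
  aesop

theorem notMem_starEdges_sink_left {k : ι} {c : V ⊕ (ι ⊕ ι)} :
    (.inr (.inr k), c) ∉ starEdges E t := by
  simp [starEdges, terminalEdges]

theorem exists_eq_of_mem_starEdges_inl_inr {v : V} {c : ι ⊕ ι}
    (h : (.inl v, .inr c) ∈ starEdges E t) : ∃ k, v = t k ∧ c = .inr k := by
  simp only [starEdges, terminalEdges, mem_union, mem_image] at h
  aesop

variable {F : Finset ((V ⊕ (ι ⊕ ι)) × (V ⊕ (ι ⊕ ι)))}

theorem card_inlPart_add_le (hT : terminalEdges t ⊆ F) :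
    #(inlPart F) + 2 * Fintype.card ι ≤ #F := by
  have hinj : Function.Injective
      (Prod.map Sum.inl Sum.inl : V × V → (V ⊕ (ι ⊕ ι)) × (V ⊕ (ι ⊕ ι))) :=
    Sum.inl_injective.prodMap Sum.inl_injective
  rw [← card_terminalEdges t, ← card_image_of_injective _ hinj,
    ← card_union_of_disjoint (disjoint_image_terminalEdges _ t)]
  exact card_le_card (union_subset (image_inlPart_subset F) hT)

variable (hF : F ⊆ starEdges E t)
include hF

theorem inlPart_subset : inlPart F ⊆ E := fun ⟨_, _⟩ h =>
  mem_starEdges_inl_inl.1 (hF (mem_inlPart.1 h))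

theorem eq_of_reach_from_sink {k : ι} {x : V ⊕ (ι ⊕ ι)} (h : Reach F (.inr (.inr k)) x) :
    x = .inr (.inr k) := by
  rcases Relation.ReflTransGen.cases_head h with rfl | ⟨c, hc, -⟩
  · rfl
  · exact absurd (hF hc) notMem_starEdges_sink_left

theorem reach_inlPart_of_reach {i j : ι} (h : Reach F (.inr (.inl i)) (.inr (.inr j))) :
    Reach (inlPart F) (t i) (t j) := by
  obtain ⟨c, hic, hcj⟩ := (Relation.ReflTransGen.cases_head h).resolve_left (by simp)
  obtain rfl := eq_of_mem_starEdges_source (hF hic)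
  obtain ⟨v, c, htv, hvc, hcj⟩ := Reach.exists_exit hcj
  obtain ⟨k, rfl, rfl⟩ := exists_eq_of_mem_starEdges_inl_inr (hF hvc)
  obtain rfl : j = k := by simpa using eq_of_reach_from_sink hF hcj
  exact htv

theorem terminalEdges_subset_of_reach [Nontrivial ι]
    (h : ∀ i j, i ≠ j → Reach F (.inr (.inl i)) (.inr (.inr j))) : terminalEdges t ⊆ F := by
  simp only [terminalEdges, union_subset_iff, image_subset_iff, mem_univ, forall_const]
  constructor
  · intro i
    obtain ⟨j, hji⟩ := exists_ne i
    obtain ⟨c, hic, -⟩ := (Relation.ReflTransGen.cases_head (h i j hji.symm)).resolve_left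
      (by simp)
    rwa [eq_of_mem_starEdges_source (hF hic)] at hic
  · intro j
    obtain ⟨i, hij⟩ := exists_ne j
    obtain ⟨c, -, hcj⟩ := (Relation.ReflTransGen.cases_tail (h i j hij)).resolve_left
      (by simp)
    rwa [eq_of_mem_starEdges_sink (hF hcj)] at hcj

end StarGraph

theorem stmt_10_general {V : Type} [DecidableEq V]
    (E : Finset (V × V)) (ℓ : ℕ) (hℓ : 2 ≤ ℓ)
    (t : Fin ℓ → V)
    (Estar : Finset ((V ⊕ (Fin ℓ ⊕ Fin ℓ)) × (V ⊕ (Fin ℓ ⊕ Fin ℓ))))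
    (hEstar : Estar =
      E.image (fun e => (Sum.inl e.1, Sum.inl e.2)) ∪
      Finset.univ.image (fun i : Fin ℓ => (Sum.inr (Sum.inl i), Sum.inl (t i))) ∪
      Finset.univ.image (fun i : Fin ℓ => (Sum.inl (t i), Sum.inr (Sum.inr i))))
    (p : ℕ) :
    (∃ E' ⊆ E, E'.card ≤ p ∧
        ∀ i j : Fin ℓ, i ≠ j → Reach E' (t i) (t j)) ↔
    (∃ E'' ⊆ Estar, E''.card ≤ p + 2 * ℓ ∧
        ∀ i j : Fin ℓ, i ≠ j →
          Reach E'' (Sum.inr (Sum.inl i)) (Sum.inr (Sum.inr j))) := by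
  have : Nontrivial (Fin ℓ) := Fin.nontrivial_iff_two_le.2 hℓ
  obtain rfl : Estar = starEdges E t := by rw [hEstar, union_assoc]; rfl
  constructor
  · rintro ⟨E', hE', hcard, hreach⟩
    refine ⟨starEdges E' t, starEdges_mono hE' t, ?_,
      fun i j hij => reach_starEdges_of_reach (hreach i j hij)⟩
    simpa using (card_starEdges_le E' t).trans (by simpa using hcard)
  · rintro ⟨F, hF, hcard, hreach⟩
    refine ⟨inlPart F, inlPart_subset hF, ?_,
      fun i j hij => reach_inlPart_of_reach hF (hreach i j hij)⟩
    have := card_inlPart_add_le (terminalEdges_subset_of_reach hF hreach)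
    rw [Fintype.card_fin] at this
    omega

/-- Correctness of the reduction from Strongly Connected Steiner Subgraph with
terminals `t₁, …, t_ℓ` to Directed Steiner Forest: in the graph `G*` obtained
from `G` by adding new vertices `r_i, s_i` and edges `(r_i, t_i)`, `(t_i, s_i)`,
with terminal pairs `T* = {(r_i, s_j) : i ≠ j}`, the SCSS instance has a
solution of size `≤ p` iff the DSF instance has a solution of size `≤ p + 2ℓ`.
Here the vertices of `G*` are `V ⊕ Fin ℓ ⊕ Fin ℓ`, with `Sum.inl w` the
original vertices, `Sum.inr (Sum.inl i) = r_i` and `Sum.inr (Sum.inr i) = s_i`. -/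
theorem stmt_10 {V : Type} [Fintype V] [DecidableEq V]
    (E : Finset (V × V)) (ℓ : ℕ) (hℓ : 2 ≤ ℓ)
    (t : Fin ℓ → V) (ht : Function.Injective t)
    (Estar : Finset ((V ⊕ (Fin ℓ ⊕ Fin ℓ)) × (V ⊕ (Fin ℓ ⊕ Fin ℓ))))
    (hEstar : Estar =
      E.image (fun e => (Sum.inl e.1, Sum.inl e.2)) ∪
      Finset.univ.image (fun i : Fin ℓ => (Sum.inr (Sum.inl i), Sum.inl (t i))) ∪
      Finset.univ.image (fun i : Fin ℓ => (Sum.inl (t i), Sum.inr (Sum.inr i))))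
    (p : ℕ) :
    (∃ E' ⊆ E, E'.card ≤ p ∧
        ∀ i j : Fin ℓ, i ≠ j → Reach E' (t i) (t j)) ↔
    (∃ E'' ⊆ Estar, E''.card ≤ p + 2 * ℓ ∧
        ∀ i j : Fin ℓ, i ≠ j →
          Reach E'' (Sum.inr (Sum.inl i)) (Sum.inr (Sum.inr j))) :=
  stmt_10_general E ℓ hℓ t Estar hEstar p
end

section
/- Let G be a finite simple graph on vertex set V and let k ≥ 1. Suppose there exists a vertex set S ⊆ V such that at least k edges of G have both endpoints in S, and let OPT be the minimum cardinality of such a set. Then OPT ≥ 2, 2k ≤ OPT·(OPT − 1), and there exists a vertex set S' ⊆ V with |S'| ≤ 2k ≤ OPT·(OPT − 1) such that at least k edges of G have both endpoints in S'. -/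
theorem sym2_mk_out {α : Type*} (e : Sym2 α) : s(e.out.1, e.out.2) = e := by
  rw [Sym2.mk, Prod.mk.eta, e.out_eq]

/-- The `(OPT − 1)`-approximation for Minimum Edge Cover: if some vertex set
covers `k ≥ 1` edges (i.e. at least `k` edges have both endpoints in it) and
`OPT` is the minimum size of such a set, then `OPT ≥ 2`, `2k ≤ OPT(OPT − 1)`,
and the endpoints of any `k` edges give a set `S'` of size `≤ 2k ≤ OPT(OPT−1)`
covering `k` edges. -/
theorem stmt_13 {V : Type} [Fintype V] [DecidableEq V]
    (G : SimpleGraph V) (k : ℕ) (hk : 1 ≤ k)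
    (OPT : ℕ)
    (hOPT : IsLeast {n | ∃ S : Finset V, S.card = n ∧
      k ≤ {e ∈ G.edgeSet | ∀ v ∈ e, v ∈ S}.ncard} OPT) :
    2 ≤ OPT ∧ 2 * k ≤ OPT * (OPT - 1) ∧
      ∃ S' : Finset V, S'.card ≤ 2 * k ∧
        k ≤ {e ∈ G.edgeSet | ∀ v ∈ e, v ∈ S'}.ncard := by
  classical
  obtain ⟨⟨S, hScard, hScov⟩, -⟩ := hOPT
  set A : Set (Sym2 V) := {e ∈ G.edgeSet | ∀ v ∈ e, v ∈ S} with hA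
  have hAfin : A.Finite := Set.toFinite A
  have hAcard : k ≤ hAfin.toFinset.card := by
    rwa [← Set.ncard_eq_toFinset_card A hAfin]
  -- a generic fact about elements of A
  have hmemA : ∀ e ∈ hAfin.toFinset, e.out.1 ∈ S ∧ e.out.2 ∈ S ∧
      e.out.1 ≠ e.out.2 ∧ e ∈ G.edgeSet := by
    intro e he
    rw [Set.Finite.mem_toFinset] at he
    obtain ⟨heE, hev⟩ := he
    refine ⟨hev _ (Sym2.out_fst_mem e), hev _ (Sym2.out_snd_mem e), ?_, heE⟩
    intro hcontra
    have hd : e.IsDiag := by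
      rw [← (sym2_mk_out e), Sym2.mk_isDiag_iff]; exact hcontra
    exact G.not_isDiag_of_mem_edgeSet heE hd
  -- A is nonempty since k ≥ 1
  obtain ⟨e₀, he₀⟩ : ∃ e, e ∈ hAfin.toFinset := by
    have : 0 < hAfin.toFinset.card := lt_of_lt_of_le hk hAcard
    exact Finset.card_pos.mp this
  obtain ⟨ha₀, hb₀, hab₀, -⟩ := hmemA e₀ he₀
  have hOPT2 : 2 ≤ OPT := by
    have hsub : {e₀.out.1, e₀.out.2} ⊆ S := by
      intro v hv
      simp only [Finset.mem_insert, Finset.mem_singleton] at hv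
      rcases hv with h | h <;> subst h <;> assumption
    have := Finset.card_le_card hsub
    rwa [Finset.card_pair hab₀, hScard] at this
  refine ⟨hOPT2, ?_, ?_⟩
  · -- 2k ≤ OPT(OPT-1) via double counting ordered pairs
    set P : Finset (V × V) := S.offDiag.filter (fun p => s(p.1, p.2) ∈ G.edgeSet) with hP
    have hmaps : ∀ p ∈ P, s(p.1, p.2) ∈ hAfin.toFinset := by
      intro p hp
      rw [hP, Finset.mem_filter, Finset.mem_offDiag] at hp
      obtain ⟨⟨h1, h2, -⟩, hE⟩ := hp
      rw [Set.Finite.mem_toFinset]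
      refine ⟨hE, ?_⟩
      intro v hv
      rw [Sym2.mem_iff] at hv
      rcases hv with h | h <;> subst h <;> assumption
    have hfib : ∀ e ∈ hAfin.toFinset,
        2 ≤ (P.filter (fun p => s(p.1, p.2) = e)).card := by
      intro e he
      obtain ⟨ha, hb, hab, heE⟩ := hmemA e he
      have h1 : (e.out.1, e.out.2) ∈ P.filter (fun p => s(p.1, p.2) = e) := by
        rw [Finset.mem_filter, hP, Finset.mem_filter, Finset.mem_offDiag]
        refine ⟨⟨⟨ha, hb, hab⟩, ?_⟩, sym2_mk_out e⟩
        rw [(sym2_mk_out e)]; exact heE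
      have h2 : (e.out.2, e.out.1) ∈ P.filter (fun p => s(p.1, p.2) = e) := by
        rw [Finset.mem_filter, hP, Finset.mem_filter, Finset.mem_offDiag]
        have hswap : s(e.out.2, e.out.1) = e := by
          rw [Sym2.eq_swap]; exact (sym2_mk_out e)
        refine ⟨⟨⟨hb, ha, hab.symm⟩, ?_⟩, hswap⟩
        rw [hswap]; exact heE
      have hne : (e.out.1, e.out.2) ≠ (e.out.2, e.out.1) := by
        intro h; exact hab (congrArg Prod.fst h)
      have hsub : {(e.out.1, e.out.2), (e.out.2, e.out.1)} ⊆
          P.filter (fun p => s(p.1, p.2) = e) := by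
        intro p hp
        simp only [Finset.mem_insert, Finset.mem_singleton] at hp
        rcases hp with h | h <;> subst h <;> assumption
      calc 2 = ({(e.out.1, e.out.2), (e.out.2, e.out.1)} : Finset (V × V)).card :=
              (Finset.card_pair hne).symm
        _ ≤ _ := Finset.card_le_card hsub
    have hcount : 2 * hAfin.toFinset.card ≤ P.card :=
      Finset.mul_card_image_le_card_of_maps_to hmaps 2 hfib
    have hPle : P.card ≤ S.offDiag.card := Finset.card_filter_le _ _
    have hoff : S.offDiag.card = OPT * OPT - OPT := by
      rw [Finset.offDiag_card, hScard]
    calc 2 * k ≤ 2 * hAfin.toFinset.card := by omega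
      _ ≤ P.card := hcount
      _ ≤ OPT * OPT - OPT := by rw [← hoff]; exact hPle
      _ = OPT * (OPT - 1) := by
          cases OPT with
          | zero => simp
          | succ n => simp [Nat.succ_sub_one, Nat.mul_succ, Nat.succ_mul]
  · -- construct S' from endpoints of k edges
    obtain ⟨T, hTsub, hTcard⟩ := Finset.exists_subset_card_eq hAcard
    refine ⟨T.biUnion (fun e => {e.out.1, e.out.2}), ?_, ?_⟩
    · calc (T.biUnion (fun e => {e.out.1, e.out.2})).card
          ≤ ∑ e ∈ T, ({e.out.1, e.out.2} : Finset V).card := Finset.card_biUnion_le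
        _ ≤ ∑ _e ∈ T, 2 := Finset.sum_le_sum (fun e _ =>
            Finset.card_insert_le _ _ |>.trans (by simp))
        _ = 2 * k := by rw [Finset.sum_const, hTcard, smul_eq_mul, mul_comm]
    · have hsub : (↑T : Set (Sym2 V)) ⊆
          {e ∈ G.edgeSet | ∀ v ∈ e, v ∈ T.biUnion (fun e => {e.out.1, e.out.2})} := by
        intro e he
        have heT : e ∈ T := he
        obtain ⟨-, -, -, heE⟩ := hmemA e (hTsub heT)
        refine ⟨heE, ?_⟩
        intro v hv
        rw [Finset.mem_biUnion]
        refine ⟨e, heT, ?_⟩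
        rw [← (sym2_mk_out e), Sym2.mem_iff] at hv
        simp only [Finset.mem_insert, Finset.mem_singleton]
        exact hv
      calc k = T.card := hTcard.symm
        _ = (↑T : Set (Sym2 V)).ncard := (Set.ncard_coe_finset T).symm
        _ ≤ _ := Set.ncard_le_ncard hsub (Set.toFinite _)
end
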